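/- If A ∈ B(H) is bounded, injective, and self-adjoint, and g ∈ ran A, then the unique solution f to A f = g belongs to the closure of the Krylov subspace K(A,g). -/

import Mathlib

/-!
The closure `K` of the Krylov subspace is a closed `A`-invariant subspace, so for self-adjoint `A`
its orthogonal complement is `A`-invariant as well. Writing `f = u + v` with `u ∈ K`, `v ∈ Kᗮ`,
the vector `A v = g - A u` lies in `K ∩ Kᗮ = 0`, and injectivity of `A` forces `v = 0`.
-/

open Module End Submodule

section Krylov

variable (R : Type*) {M : Type*} [Semiring R] [AddCommMonoid M] [Module R M]

def krylovSubspace (f : Module.End R M) (x : M) : Submodule R M :=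
  span R (Set.range fun k : ℕ => (f ^ k) x)

variable {R}

theorem self_mem_krylovSubspace (f : Module.End R M) (x : M) : x ∈ krylovSubspace R f x :=
  subset_span ⟨0, by simp⟩

theorem krylovSubspace_mem_invtSubmodule (f : Module.End R M) (x : M) :
    krylovSubspace R f x ∈ f.invtSubmodule := by
  rw [mem_invtSubmodule_iff_map_le, krylovSubspace, map_span, ← Set.range_comp]
  exact span_mono fun _ ⟨k, hk⟩ => ⟨k + 1, by simpa [pow_succ'] using hk⟩

end Krylov

theorem LinearMap.IsSymmetric.mem_of_apply_mem_of_mem_invtSubmodule {𝕜 E : Type*} [RCLike 𝕜]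
    [NormedAddCommGroup E] [InnerProductSpace 𝕜 E] {T : Module.End 𝕜 E} (hT : T.IsSymmetric)
    (hinj : Function.Injective T) {K : Submodule 𝕜 E} [K.HasOrthogonalProjection]
    (hK : K ∈ T.invtSubmodule) {f : E} (hf : T f ∈ K) : f ∈ K := by
  obtain ⟨u, hu, v, hv, rfl⟩ := K.exists_add_mem_mem_orthogonal f
  have hTv_mem : T v ∈ K := by simpa using K.sub_mem hf (hK hu)
  have hTv_perp : T v ∈ Kᗮ := hT.orthogonalComplement_mem_invtSubmodule hK hv
  have hv0 : v = 0 := hinj <| by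
    rw [map_zero, ← inner_self_eq_zero (𝕜 := 𝕜)]
    exact hTv_perp _ hTv_mem
  simpa [hv0] using hu

/-- Corollary 2.1: well-defined self-adjoint inverse problems are Krylov solvable:
if `A` is bounded, injective and self-adjoint and `A f = g`, then `f ∈ closure(K(A,g))`. -/
theorem stmt6 {H : Type*} [NormedAddCommGroup H] [InnerProductSpace ℂ H]
    [CompleteSpace H] (A : H →L[ℂ] H) (hA : IsSelfAdjoint A)
    (hinj : Function.Injective A) (g f : H) (hf : A f = g) :
    f ∈ (Submodule.span ℂ (Set.range fun k : ℕ => (A ^ k) g)).topologicalClosure := by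
  have hspan : span ℂ (Set.range fun k : ℕ => (A ^ k) g) = krylovSubspace ℂ A.toLinearMap g := by
    simp only [krylovSubspace, ← ContinuousLinearMap.toLinearMap_pow]; rfl
  rw [hspan]
  refine hA.isSymmetric.mem_of_apply_mem_of_mem_invtSubmodule hinj
    (topologicalClosure_mem_invtSubmodule (krylovSubspace_mem_invtSubmodule _ g)) ?_
  rw [ContinuousLinearMap.coe_coe, hf]
  exact le_topologicalClosure _ (self_mem_krylovSubspace _ g)
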